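/- For all integers s, t ≥ 2, the grid graph P_s □ P_t has metric dimension 2. -/

import Mathlib

open SimpleGraph

/-- `W` is a resolving set of `G`: every pair of distinct vertices is
distinguished by its distance to some vertex of `W`. -/
def IsResolving {V : Type*} (G : SimpleGraph V) (W : Set V) : Prop :=
  ∀ x y : V, x ≠ y → ∃ z ∈ W, G.dist x z ≠ G.dist y z

/-- The metric dimension of `G`: the minimum cardinality of a resolving set. -/
noncomputable def metricDim {V : Type*} (G : SimpleGraph V) : ℕ :=
  sInf {n | ∃ W : Set V, W.ncard = n ∧ IsResolving G W}

/-!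
In the grid `P_s □ P_t` the distance is the sum of the coordinate distances. Two corners on a
common side resolve the grid: from `(a, b)` they see `a + b` and `a + (t - 1 - b)`, which
determine `a` and `b`. No single vertex `z` resolves it, since `z` has two distinct neighbours,
both at distance `1` from `z`.
-/

variable {V α β : Type*}

lemma metricDim_le_ncard {G : SimpleGraph V} {W : Set V} (hW : IsResolving G W) :
    metricDim G ≤ W.ncard :=
  Nat.sInf_le ⟨W, rfl, hW⟩

lemma le_metricDim {G : SimpleGraph V} {n : ℕ} (hG : ∃ W, IsResolving G W)
    (h : ∀ W, IsResolving G W → n ≤ W.ncard) : n ≤ metricDim G := by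
  obtain ⟨W, hW⟩ := hG
  exact le_csInf ⟨_, W, rfl, hW⟩ fun _ ⟨W', hW'n, hW'⟩ ↦ hW'n ▸ h W' hW'

lemma IsResolving.not_subsingleton [Nonempty V] {G : SimpleGraph V} {W : Set V}
    (hW : IsResolving G W) (hdeg : ∀ z, ∃ x y, G.Adj z x ∧ G.Adj z y ∧ x ≠ y) :
    ¬ W.Subsingleton := by
  intro hsub
  obtain ⟨x, y, -, -, hxy⟩ := hdeg (Classical.arbitrary V)
  obtain ⟨z, hz, -⟩ := hW x y hxy
  obtain ⟨x', y', hx', hy', hxy'⟩ := hdeg z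
  obtain ⟨z', hz', hne⟩ := hW x' y' hxy'
  rw [hsub hz' hz, dist_eq_one_iff_adj.mpr hx'.symm, dist_eq_one_iff_adj.mpr hy'.symm] at hne
  exact hne rfl

namespace SimpleGraph

lemma Walk.natDist_le_length {G : SimpleGraph V} {f : V → ℕ}
    (hf : ∀ u v, G.Adj u v → Nat.dist (f u) (f v) ≤ 1) {u v : V} (w : G.Walk u v) :
    Nat.dist (f u) (f v) ≤ w.length := by
  induction w with
  | nil => simp
  | @cons u v w h p ih =>
    have := Nat.dist.triangle_inequality (f u) (f v) (f w)
    have := hf u v h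
    rw [Walk.length_cons]
    omega

lemma Reachable.natDist_le_dist {G : SimpleGraph V} {f : V → ℕ}
    (hf : ∀ u v, G.Adj u v → Nat.dist (f u) (f v) ≤ 1) {u v : V} (h : G.Reachable u v) :
    Nat.dist (f u) (f v) ≤ G.dist u v := by
  obtain ⟨w, hw⟩ := h.exists_walk_length_eq_dist
  exact hw ▸ w.natDist_le_length hf

lemma dist_boxProd {G : SimpleGraph α} {H : SimpleGraph β} {x y : α × β}
    (h₁ : G.Reachable x.1 y.1) (h₂ : H.Reachable x.2 y.2) :
    (G □ H).dist x y = G.dist x.1 y.1 + H.dist x.2 y.2 := by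
  rw [SimpleGraph.dist, edist_boxProd, ← h₁.coe_dist_eq_edist, ← h₂.coe_dist_eq_edist,
    ← Nat.cast_add, ENat.toNat_natCast]

lemma boxProd_exists_two_adj {G : SimpleGraph α} {H : SimpleGraph β}
    (hG : ∀ a, ∃ a', G.Adj a a') (hH : ∀ b, ∃ b', H.Adj b b') (x : α × β) :
    ∃ y z, (G □ H).Adj x y ∧ (G □ H).Adj x z ∧ y ≠ z := by
  obtain ⟨a', ha'⟩ := hG x.1
  obtain ⟨b', hb'⟩ := hH x.2
  refine ⟨(a', x.2), (x.1, b'), .inl ⟨ha', rfl⟩, .inr ⟨hb', rfl⟩, fun h ↦ ?_⟩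
  exact hb'.ne (congrArg Prod.snd h)

lemma pathGraph_dist_le_of_add {n : ℕ} (k : ℕ) {i j : Fin n} (hij : i.val + k = j.val) :
    (pathGraph n).dist i j ≤ k := by
  induction k generalizing j with
  | zero => simp [Fin.ext hij]
  | succ k ih =>
    let m : Fin n := ⟨i.val + k, by omega⟩
    have hmj : (pathGraph n).Adj m j := pathGraph_adj.mpr (.inl (by simp only [m]; omega))
    calc (pathGraph n).dist i j ≤ (pathGraph n).dist i m + (pathGraph n).dist m j :=
          hmj.reachable.dist_triangle_right i
      _ ≤ k + 1 := by rw [dist_eq_one_iff_adj.mpr hmj]; exact Nat.add_le_add_right (ih rfl) 1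

lemma pathGraph_dist {n : ℕ} (i j : Fin n) :
    (pathGraph n).dist i j = Nat.dist i j := by
  refine le_antisymm ?_ ?_
  · rcases le_total i.val j.val with h | h
    · exact pathGraph_dist_le_of_add _ (by simp only [Nat.dist]; omega)
    · rw [dist_comm]
      exact pathGraph_dist_le_of_add _ (by simp only [Nat.dist]; omega)
  · refine Reachable.natDist_le_dist (fun u v huv ↦ ?_) (pathGraph_preconnected n i j)
    rw [pathGraph_adj] at huv
    simp only [Nat.dist]
    omega

lemma pathGraph_exists_adj {n : ℕ} (hn : 2 ≤ n) (i : Fin n) : ∃ j, (pathGraph n).Adj i j := by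
  by_cases hi : i.val = 0
  · exact ⟨⟨1, hn⟩, pathGraph_adj.mpr (.inl (by simp [hi]))⟩
  · refine ⟨⟨i.val - 1, by omega⟩, pathGraph_adj.mpr (.inr ?_)⟩
    exact Nat.sub_add_cancel (Nat.pos_of_ne_zero hi)

lemma dist_grid {s t : ℕ} (x y : Fin s × Fin t) :
    (pathGraph s □ pathGraph t).dist x y = Nat.dist x.1 y.1 + Nat.dist x.2 y.2 := by
  rw [dist_boxProd (pathGraph_preconnected s _ _) (pathGraph_preconnected t _ _),
    pathGraph_dist, pathGraph_dist]

lemma isResolving_grid_corners {s t : ℕ} (hs : 0 < s) (ht : 0 < t) :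
    IsResolving (pathGraph s □ pathGraph t)
      {(⟨0, hs⟩, ⟨0, ht⟩), (⟨0, hs⟩, ⟨t - 1, Nat.sub_lt ht one_pos⟩)} := by
  intro x y hxy
  by_contra! h
  have h₁ := h _ (Set.mem_insert _ _)
  have h₂ := h _ (Set.mem_insert_of_mem _ rfl)
  simp only [dist_grid, Nat.dist] at h₁ h₂
  have := x.2.isLt
  have := y.2.isLt
  exact hxy (Prod.ext (Fin.ext (by omega)) (Fin.ext (by omega)))

end SimpleGraph

theorem metricDim_grid (s t : ℕ) (hs : 2 ≤ s) (ht : 2 ≤ t) :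
    metricDim (pathGraph s □ pathGraph t) = 2 := by
  have hcorners := isResolving_grid_corners (s := s) (t := t) (by omega) (by omega)
  refine le_antisymm ?_ (le_metricDim ⟨_, hcorners⟩ fun W hW ↦ ?_)
  · refine (metricDim_le_ncard hcorners).trans_eq (Set.ncard_pair ?_)
    simp only [ne_eq, Prod.mk.injEq, Fin.mk.injEq, true_and]
    omega
  · have : Nonempty (Fin s × Fin t) := ⟨(⟨0, by omega⟩, ⟨0, by omega⟩)⟩
    have hdeg := boxProd_exists_two_adj (pathGraph_exists_adj hs) (pathGraph_exists_adj ht)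
    exact Set.one_lt_ncard_iff_nontrivial.mpr
      (Set.not_subsingleton_iff.mp (hW.not_subsingleton hdeg))
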